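/- In a directed graph where every vertex has out-degree at most one, if edge B lies on a directed cycle containing an edge A with A ≠ B, then after deleting A, edge B does not lie on any directed cycle. Consequently, if B lies on a cycle both with and without A present, these cycles must be the same, and A is not on that cycle. -/

import Mathlib

/-- `c` is a directed cycle of the digraph with edge relation `E`: a nonempty list of
distinct vertices with an edge between consecutive vertices and from the last back to
the first. -/
def IsCycle {V : Type} (E : V → V → Prop) (c : List V) : Prop :=
  ∃ h : c ≠ [], c.Nodup ∧ c.Chain' E ∧ E (c.getLast h) (c.head h)

/-- the edge `(a, b)` lies on the cycle `c` (i.e. `a, b` are cyclically consecutive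
in `c`). -/
def OnCycle {V : Type} (c : List V) (a b : V) : Prop :=
  ∃ h : c ≠ [], [a, b] <:+: (c ++ [c.head h])

namespace DelAux

variable {V : Type} {E : V → V → Prop}

lemma gidx {l : List V} {i j : ℕ} (hij : i = j) (hi : i < l.length) (hj : j < l.length) :
    l[i]'hi = l[j]'hj := by subst hij; rfl

lemma isCycle_mono {E' : V → V → Prop} (h : ∀ x y, E' x y → E x y) {l : List V}
    (hc : IsCycle E' l) : IsCycle E l := by
  obtain ⟨hne, hnd, hch, hw⟩ := hc
  exact ⟨hne, hnd, hch.imp (fun {x y} => h x y), h _ _ hw⟩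

lemma infix_pair_iff {l : List V} {a b : V} :
    [a, b] <:+: l ↔ ∃ i, ∃ h : i + 1 < l.length, l[i]'(by omega) = a ∧ l[i+1]'h = b := by
  constructor
  · rintro ⟨s, t, rfl⟩
    refine ⟨s.length, by simp, ?_, ?_⟩
    · rw [List.getElem_append_left (by simp : s.length < (s ++ [a, b]).length)]
      rw [List.getElem_append_right (le_refl s.length)]
      simp
    · rw [List.getElem_append_left (by simp : s.length + 1 < (s ++ [a, b]).length)]
      rw [List.getElem_append_right (by omega : s.length ≤ s.length + 1)]
      simp
  · rintro ⟨i, h, ha, hb⟩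
    refine ⟨l.take i, l.drop (i+2), ?_⟩
    have h1 : l.drop i = a :: b :: l.drop (i+2) := by
      rw [List.drop_eq_getElem_cons (by omega : i < l.length), ha,
        List.drop_eq_getElem_cons h, hb]
    rw [show l.take i ++ [a, b] ++ l.drop (i+2) = l.take i ++ (a :: b :: l.drop (i+2)) by simp,
      ← h1, List.take_append_drop]

lemma onCycle_iff {l : List V} (hne : l ≠ []) {a b : V} :
    OnCycle l a b ↔ ∃ i, ∃ h : i < l.length, l[i]'h = a ∧
      l[(i+1) % l.length]'(Nat.mod_lt _ (List.length_pos_iff.mpr hne)) = b := by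
  have hn : 0 < l.length := List.length_pos_iff.mpr hne
  constructor
  · rintro ⟨hne', hinf⟩
    rw [infix_pair_iff] at hinf
    obtain ⟨i, h, ha, hb⟩ := hinf
    simp only [List.length_append, List.length_singleton] at h
    have hi : i < l.length := by omega
    refine ⟨i, hi, ?_, ?_⟩
    · rw [← ha, List.getElem_append_left hi]
    · rcases Nat.lt_or_ge (i+1) l.length with h2 | h2
      · have h5 : (i+1) % l.length = i+1 := Nat.mod_eq_of_lt h2
        rw [← hb, List.getElem_append_left h2]
        congr 1
      · have h3 : i + 1 = l.length := by omega
        have h4 : (i+1) % l.length = 0 := by rw [h3, Nat.mod_self]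
        have h6 : i + 1 - l.length = 0 := by omega
        calc l[(i+1) % l.length]'(Nat.mod_lt _ hn)
            = l[0]'hn := gidx h4 _ _
          _ = l.head hne' := (List.head_eq_getElem hne').symm
          _ = [l.head hne'][i + 1 - l.length]'(by simp; omega) := by
              rw [gidx h6 (by simp; omega) (by simp)]; simp
          _ = (l ++ [l.head hne'])[i+1]'(by simp; omega) := (List.getElem_append_right (by omega)).symm
          _ = b := hb
  · rintro ⟨i, hi, ha, hb⟩
    refine ⟨hne, infix_pair_iff.mpr ⟨i, by simp; omega, ?_, ?_⟩⟩
    · rw [List.getElem_append_left hi, ha]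
    · rcases Nat.lt_or_ge (i+1) l.length with h2 | h2
      · rw [List.getElem_append_left h2, ← hb]
        congr 1
        exact (Nat.mod_eq_of_lt h2).symm
      · have h3 : i + 1 = l.length := by omega
        have h4 : (i+1) % l.length = 0 := by rw [h3, Nat.mod_self]
        have h6 : i + 1 - l.length = 0 := by omega
        calc (l ++ [l.head hne])[i+1]'(by simp; omega)
            = [l.head hne][i + 1 - l.length]'(by simp; omega) :=
              List.getElem_append_right (by omega)
          _ = [l.head hne][0]'(by simp) := gidx h6 _ _
          _ = l.head hne := by simp
          _ = l[(i+1) % l.length]'(Nat.mod_lt _ hn) := by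
              rw [List.head_eq_getElem]; exact gidx h4.symm _ _
          _ = b := hb

lemma onCycle_mem {l : List V} {a b : V} (h : OnCycle l a b) : a ∈ l := by
  obtain ⟨hne, hinf⟩ := h
  have ha : a ∈ l ++ [l.head hne] := hinf.subset (by simp)
  rcases List.mem_append.mp ha with h1 | h1
  · exact h1
  · simp at h1; subst h1; exact List.head_mem hne

open Classical in
noncomputable def nextV (E : V → V → Prop) : V → V :=
  fun x => if h : ∃ y, E x y then h.choose else x

lemma nextV_eq (hdeg : ∀ a b c : V, E a b → E a c → b = c) {x y : V} (h : E x y) :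
    nextV E x = y := by
  have hex : ∃ y, E x y := ⟨y, h⟩
  simp only [nextV, dif_pos hex]
  exact hdeg _ _ _ hex.choose_spec h

lemma cycle_getElem (hdeg : ∀ a b c : V, E a b → E a c → b = c) {l : List V}
    (hc : IsCycle E l) (hne : l ≠ []) :
    ∀ i (h : i < l.length), l[i]'h = (nextV E)^[i] (l.head hne) := by
  obtain ⟨hne', hnd, hch, hw⟩ := hc
  intro i
  induction i with
  | zero => intro h; simp [List.head_eq_getElem]
  | succ k ih =>
    intro h
    have hk : k < l.length := by omega
    have hE : E (l[k]'hk) (l[k+1]'h) := by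
      have := List.isChain_iff_getElem.mp hch k (by omega)
      simpa using this
    rw [Function.iterate_succ_apply', ← ih hk, ← nextV_eq hdeg hE]

lemma cycle_iterate_length (hdeg : ∀ a b c : V, E a b → E a c → b = c) {l : List V}
    (hc : IsCycle E l) (hne : l ≠ []) :
    (nextV E)^[l.length] (l.head hne) = l.head hne := by
  have hn : 0 < l.length := List.length_pos_iff.mpr hne
  have hw : E (l.getLast hne) (l.head hne) := by
    obtain ⟨hne', hnd, hch, hw⟩ := hc
    exact hw
  have h1 : l.getLast hne = l[l.length - 1]'(by omega) := List.getLast_eq_getElem hne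
  have h2 : l[l.length - 1]'(by omega) = (nextV E)^[l.length - 1] (l.head hne) :=
    cycle_getElem hdeg hc hne _ (by omega)
  have h3 : nextV E (l.getLast hne) = l.head hne := nextV_eq hdeg hw
  calc (nextV E)^[l.length] (l.head hne)
      = nextV E ((nextV E)^[l.length - 1] (l.head hne)) := by
        rw [← Function.iterate_succ_apply' (nextV E)]
        congr 1
        omega
    _ = l.head hne := by rw [← h2, ← h1, h3]

lemma cycle_length_le (hdeg : ∀ a b c : V, E a b → E a c → b = c) {l l' : List V}
    (hc : IsCycle E l) (hc' : IsCycle E l') (hne : l ≠ []) (hne' : l' ≠ [])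
    (hh : l.head hne = l'.head hne') : l.length ≤ l'.length := by
  by_contra hlt
  push_neg at hlt
  have hn' : 0 < l'.length := List.length_pos_iff.mpr hne'
  have h1 : l[l'.length]'hlt = (nextV E)^[l'.length] (l.head hne) :=
    cycle_getElem hdeg hc hne _ hlt
  have h2 : (nextV E)^[l'.length] (l.head hne) = l.head hne := by
    rw [hh]; exact cycle_iterate_length hdeg hc' hne'
  have h3 : l[l'.length]'hlt = l[0]'(by omega) := by
    rw [h1, h2, List.head_eq_getElem]
  have hnd : l.Nodup := hc.choose_spec.1
  have := (hnd.getElem_inj_iff).mp h3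
  omega

lemma cycle_eq_of_head_eq (hdeg : ∀ a b c : V, E a b → E a c → b = c) {l l' : List V}
    (hc : IsCycle E l) (hc' : IsCycle E l') (hne : l ≠ []) (hne' : l' ≠ [])
    (hh : l.head hne = l'.head hne') : l = l' := by
  have hlen : l.length = l'.length :=
    le_antisymm (cycle_length_le hdeg hc hc' hne hne' hh)
      (cycle_length_le hdeg hc' hc hne' hne hh.symm)
  refine List.ext_getElem hlen fun i h1 h2 => ?_
  rw [cycle_getElem hdeg hc hne i h1, cycle_getElem hdeg hc' hne' i h2, hh]

lemma isCycle_rotate_one {l : List V} (hc : IsCycle E l) : IsCycle E (l.rotate 1) := by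
  obtain ⟨hne, hnd, hch, hw⟩ := hc
  match l, hne, hnd, hch, hw with
  | [x], hne, hnd, hch, hw =>
    rw [List.rotate_singleton]
    exact ⟨hne, hnd, hch, hw⟩
  | x :: y :: t, hne, hnd, hch, hw =>
    have hrot : (x :: y :: t).rotate 1 = (y :: t) ++ [x] := by
      rw [show (1 : ℕ) = 0 + 1 by rfl, List.rotate_cons_succ, List.rotate_zero]
    rw [hrot]
    have hne2 : (y :: t) ++ [x] ≠ [] := by simp
    refine ⟨hne2, ?_, ?_, ?_⟩
    · have hcomm : ((y :: t) ++ [x]).Nodup ↔ ([x] ++ (y :: t)).Nodup :=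
        List.nodup_append_comm
      exact hcomm.mpr hnd
    · rw [List.Chain', List.isChain_append]
      refine ⟨hch.tail, by simp, ?_⟩
      intro p hp q hq
      simp only [List.head?_cons, Option.mem_def, Option.some.injEq] at hq
      subst hq
      have hp' : p = (x :: y :: t).getLast (by simp) := by
        rw [List.getLast?_eq_getLast (by simp : y :: t ≠ [])] at hp
        simp only [Option.mem_def, Option.some.injEq] at hp
        rw [← hp, List.getLast_cons (by simp : y :: t ≠ [])]
      rw [hp']
      exact hw
    · have hlast : ((y :: t) ++ [x]).getLast hne2 = x := by
        simp [List.getLast_append]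
      have hhead : ((y :: t) ++ [x]).head hne2 = y := by simp
      rw [hlast, hhead]
      exact (List.isChain_cons_cons.mp hch).1

lemma isCycle_rotate {l : List V} (hc : IsCycle E l) (n : ℕ) : IsCycle E (l.rotate n) := by
  induction n with
  | zero => simpa using hc
  | succ k ih =>
    have h : l.rotate (k + 1) = (l.rotate k).rotate 1 := by rw [List.rotate_rotate]
    rw [h]
    exact isCycle_rotate_one ih

lemma head_rotate {l : List V} {k : ℕ} (hk : k < l.length) (hne : l.rotate k ≠ []) :
    (l.rotate k).head hne = l[k]'hk := by
  rw [List.head_eq_getElem, List.getElem_rotate]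
  congr 1
  simp [Nat.mod_eq_of_lt hk]

lemma exists_rotate_eq (hdeg : ∀ a b c : V, E a b → E a c → b = c) {l l' : List V} {v : V}
    (hc : IsCycle E l) (hc' : IsCycle E l') (hv : v ∈ l) (hv' : v ∈ l') :
    ∃ n, l' = l.rotate n := by
  classical
  have hne : l ≠ [] := hc.choose
  have hne' : l' ≠ [] := hc'.choose
  have hk : List.idxOf v l < l.length := List.idxOf_lt_length_iff.mpr hv
  have hm : List.idxOf v l' < l'.length := List.idxOf_lt_length_iff.mpr hv'
  set k := List.idxOf v l
  set m := List.idxOf v l'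
  have hck : IsCycle E (l.rotate k) := isCycle_rotate hc k
  have hcm : IsCycle E (l'.rotate m) := isCycle_rotate hc' m
  have hnek : l.rotate k ≠ [] := hck.choose
  have hnem : l'.rotate m ≠ [] := hcm.choose
  have hhk : (l.rotate k).head hnek = v := by
    rw [head_rotate hk]; exact List.getElem_idxOf hk
  have hhm : (l'.rotate m).head hnem = v := by
    rw [head_rotate hm]; exact List.getElem_idxOf hm
  have heq : l.rotate k = l'.rotate m :=
    cycle_eq_of_head_eq hdeg hck hcm hnek hnem (hhk.trans hhm.symm)
  refine ⟨k + (l'.length - m), ?_⟩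
  have h5 : (l.rotate k).rotate (l'.length - m) = l'.rotate (m + (l'.length - m)) := by
    rw [heq, List.rotate_rotate]
  rw [← List.rotate_rotate, h5, Nat.add_sub_cancel' (le_of_lt hm), List.rotate_length]

lemma onCycle_rel {l : List V} {a b : V} (hc : IsCycle E l) (h : OnCycle l a b) : E a b := by
  obtain ⟨hne, hnd, hch, hw⟩ := hc
  rw [onCycle_iff hne] at h
  obtain ⟨i, hi, ha, hb⟩ := h
  rcases Nat.lt_or_ge (i+1) l.length with h2 | h2
  · have hE : E (l[i]'hi) (l[i+1]'h2) := by
      have := List.isChain_iff_getElem.mp hch i (by omega)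
      simpa using this
    have h6 : l[(i+1) % l.length]'(Nat.mod_lt _ (List.length_pos_iff.mpr hne)) = l[i+1]'h2 := by
      congr 1
      exact Nat.mod_eq_of_lt h2
    rw [ha] at hE
    rw [← h6, hb] at hE
    exact hE
  · have h3 : i + 1 = l.length := by omega
    have hlast : l.getLast hne = l[i]'hi := by
      rw [List.getLast_eq_getElem]; congr 1; omega
    have hhead : l.head hne = l[(i+1) % l.length]'(Nat.mod_lt _ (List.length_pos_iff.mpr hne)) := by
      rw [List.head_eq_getElem]; congr 1
      rw [h3, Nat.mod_self]
    rw [hlast, hhead, ha, hb] at hw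
    exact hw

lemma onCycle_of_mem (hdeg : ∀ a b c : V, E a b → E a c → b = c) {l : List V} {x y : V}
    (hc : IsCycle E l) (hx : x ∈ l) (hxy : E x y) : OnCycle l x y := by
  classical
  have hne : l ≠ [] := hc.choose
  obtain ⟨hne', hnd, hch, hw⟩ := hc
  have hi : List.idxOf x l < l.length := List.idxOf_lt_length_iff.mpr hx
  set i := List.idxOf x l
  have hxi : l[i]'hi = x := List.getElem_idxOf hi
  rw [onCycle_iff hne]
  refine ⟨i, hi, hxi, ?_⟩
  rcases Nat.lt_or_ge (i+1) l.length with h2 | h2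
  · have hE : E (l[i]'hi) (l[i+1]'h2) := by
      have := List.isChain_iff_getElem.mp hch i (by omega)
      simpa using this
    rw [hxi] at hE
    have h7 : l[i+1]'h2 = y := hdeg _ _ _ hE hxy
    have h8 : l[(i+1) % l.length]'(Nat.mod_lt _ (List.length_pos_iff.mpr hne)) = l[i+1]'h2 := by
      congr 1
      exact Nat.mod_eq_of_lt h2
    rw [h8, h7]
  · have h3 : i + 1 = l.length := by omega
    have hlast : l.getLast hne = l[i]'hi := by
      rw [List.getLast_eq_getElem]; congr 1; omega
    rw [hlast, hxi] at hw
    have hy : l.head hne = y := hdeg _ _ _ hw hxy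
    have h9 : l[(i+1) % l.length]'(Nat.mod_lt _ (List.length_pos_iff.mpr hne)) = l.head hne := by
      rw [List.head_eq_getElem]
      congr 1
      rw [h3, Nat.mod_self]
    rw [h9, hy]

end DelAux

open DelAux

/-- in a digraph with out-degree at most one, (i) if edge `B` lies on a
directed cycle that also contains the edge `A ≠ B`, then after deleting `A` the edge
`B` lies on no directed cycle; (ii) consequently, if `B` lies on a cycle both with `A`
present and with `A` deleted, these cycles are the same (up to rotation) and `A` does
not lie on that cycle. -/
theorem delete_edge_kills_cycles {V : Type} (E : V → V → Prop)
    (hdeg : ∀ a b c : V, E a b → E a c → b = c)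
    (a₁ a₂ b₁ b₂ : V) (hA : E a₁ a₂) (hB : E b₁ b₂) (hne : (a₁, a₂) ≠ (b₁, b₂)) :
    (∀ c, IsCycle E c → OnCycle c b₁ b₂ → OnCycle c a₁ a₂ →
       ∀ c', IsCycle (fun x y => E x y ∧ (x, y) ≠ (a₁, a₂)) c' → ¬ OnCycle c' b₁ b₂) ∧
    (∀ c c', IsCycle E c → OnCycle c b₁ b₂ →
       IsCycle (fun x y => E x y ∧ (x, y) ≠ (a₁, a₂)) c' → OnCycle c' b₁ b₂ →
       (∃ n : ℕ, c' = c.rotate n) ∧ ¬ OnCycle c a₁ a₂) := by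
  have main : ∀ c c', IsCycle E c → OnCycle c b₁ b₂ →
      IsCycle (fun x y => E x y ∧ (x, y) ≠ (a₁, a₂)) c' → OnCycle c' b₁ b₂ →
      (∃ n : ℕ, c' = c.rotate n) ∧ ¬ OnCycle c a₁ a₂ := by
    intro c c' hc hcB hc' hc'B
    have hc'E : IsCycle E c' := isCycle_mono (fun x y h => h.1) hc'
    have hvB : b₁ ∈ c := onCycle_mem hcB
    have hvB' : b₁ ∈ c' := onCycle_mem hc'B
    obtain ⟨n, hn⟩ := exists_rotate_eq hdeg hc hc'E hvB hvB'
    refine ⟨⟨n, hn⟩, ?_⟩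
    intro hcA
    have hvA : a₁ ∈ c := onCycle_mem hcA
    have hvA' : a₁ ∈ c' := by rw [hn, List.mem_rotate]; exact hvA
    have hOn : OnCycle c' a₁ a₂ := onCycle_of_mem hdeg hc'E hvA' hA
    have hE' := onCycle_rel hc' hOn
    exact hE'.2 rfl
  constructor
  · intro c hc hcB hcA c' hc' hc'B
    exact (main c c' hc hcB hc' hc'B).2 hcA
  · exact main
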